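/- arXiv:2201.10050 — 3 statements merged into one kernel-verified Lean document; each statement's English description precedes it below -/
import Mathlib

section
/- Suppose u ∈ C¹(ℝ^N) with N ≥ 3, and suppose that for every b ∈ ℝ^N, every λ > 0, and every x ∈ B_λ(0) \ {0}, the inequality |x|^{−(N−2)} u(x/|x|² + b) − λ^{−(N−2)} u(x/λ² + b) ≥ 0 holds. Then u is constant. -/
open Filter Topology Real

set_option maxHeartbeats 1000000

theorem stmt2 (N : ℕ) (hN : 3 ≤ N)
    (u : EuclideanSpace ℝ (Fin N) → ℝ) (hu : ContDiff ℝ 1 u)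
    (h : ∀ (b : EuclideanSpace ℝ (Fin N)) (lam : ℝ), 0 < lam →
      ∀ x : EuclideanSpace ℝ (Fin N), x ≠ 0 → ‖x‖ < lam →
        0 ≤ ‖x‖ ^ (-((N : ℝ) - 2)) * u ((‖x‖ ^ 2)⁻¹ • x + b)
            - lam ^ (-((N : ℝ) - 2)) * u ((lam ^ 2)⁻¹ • x + b)) :
    ∀ x y, u x = u y := by
  have hn : (0:ℝ) < (N:ℝ) - 2 := by
    have : (3:ℝ) ≤ (N:ℝ) := by exact_mod_cast hN
    linarith
  have hN0 : 0 < N := by omega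
  set e : EuclideanSpace ℝ (Fin N) := EuclideanSpace.single ⟨0, hN0⟩ 1 with he_def
  have he : ‖e‖ = 1 := by
    rw [he_def, EuclideanSpace.norm_single]; norm_num
  have he0 : e ≠ 0 := by
    intro h0; rw [h0] at he; simp at he
  -- Step 1: u is nonnegative
  have hnonneg : ∀ z, 0 ≤ u z := by
    intro z
    set b := z - e with hb
    have key : ∀ lam : ℝ, 1 < lam →
        lam ^ (-((N:ℝ) - 2)) * u ((lam^2)⁻¹ • e + b) ≤ u z := by
      intro lam hlam
      have H := h b lam (by linarith) e he0 (by rw [he]; exact hlam)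
      rw [he] at H
      have hz : ((1:ℝ)^2)⁻¹ • e + b = z := by
        rw [hb, one_pow, inv_one, one_smul]; abel
      rw [hz, Real.one_rpow, one_mul] at H
      linarith
    have ht : Tendsto (fun lam : ℝ => lam ^ (-((N:ℝ) - 2)) * u ((lam^2)⁻¹ • e + b))
        atTop (𝓝 0) := by
      have h1 : Tendsto (fun lam : ℝ => lam ^ (-((N:ℝ) - 2))) atTop (𝓝 0) :=
        tendsto_rpow_neg_atTop hn
      have h3 : Tendsto (fun lam : ℝ => (lam^2)⁻¹) atTop (𝓝 0) :=
        (tendsto_pow_atTop (two_ne_zero)).inv_tendsto_atTop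
      have h4 : Tendsto (fun lam : ℝ => (lam^2)⁻¹ • e + b) atTop (𝓝 b) := by
        have h5 := (h3.smul_const e).add (tendsto_const_nhds (x := b))
        rw [zero_smul, zero_add] at h5
        exact h5
      have h2 : Tendsto (fun lam : ℝ => u ((lam^2)⁻¹ • e + b)) atTop (𝓝 (u b)) :=
        (hu.continuous.tendsto b).comp h4
      have h6 := h1.mul h2
      rw [zero_mul] at h6
      exact h6
    exact le_of_tendsto ht (eventually_atTop.2 ⟨2, fun lam hlam => key lam (by linarith)⟩)
  -- Step 2: main comparison
  have main : ∀ p q, u q ≤ u p := by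
    intro p q
    rcases eq_or_ne p q with rfl | hpq
    · exact le_refl _
    have hd : 0 < ‖p - q‖ := by
      rw [norm_pos_iff]; exact sub_ne_zero.2 hpq
    set d := ‖p - q‖ with hd_def
    set v : EuclideanSpace ℝ (Fin N) := d⁻¹ • (p - q) with hv_def
    have hv : ‖v‖ = 1 := by
      rw [hv_def, norm_smul, Real.norm_eq_abs, abs_of_pos (inv_pos.2 hd), ← hd_def, inv_mul_cancel₀ hd.ne']
    have hv0 : v ≠ 0 := by
      intro h0; rw [h0] at hv; simp at hv
    have hdv : d • v = p - q := by
      rw [hv_def, smul_smul, mul_inv_cancel₀ hd.ne', one_smul]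
    have key : ∀ t : ℝ, 0 < t → t < d⁻¹ →
        u q ≤ (Real.sqrt (1 - t*d)) ^ (-((N:ℝ) - 2)) * u p := by
      intro t ht htd
      have htd1 : t * d < 1 := by
        calc t * d < d⁻¹ * d := by exact mul_lt_mul_of_pos_right htd hd
        _ = 1 := inv_mul_cancel₀ hd.ne'
      set s : ℝ := 1 - t*d with hs_def
      have hs0 : 0 < s := by rw [hs_def]; linarith
      have hs1 : s < 1 := by
        have : 0 < t * d := mul_pos ht hd
        rw [hs_def]; linarith
      set r : ℝ := Real.sqrt s with hr_def
      have hr0 : 0 < r := Real.sqrt_pos.2 hs0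
      have hr1 : r < 1 := by
        rw [hr_def, show (1:ℝ) = Real.sqrt 1 by simp]
        exact Real.sqrt_lt_sqrt hs0.le hs1
      have hr2 : r^2 = s := Real.sq_sqrt hs0.le
      set lam : ℝ := t / r with hlam_def
      have hlam0 : 0 < lam := div_pos ht hr0
      have htlam : t < lam := by
        rw [hlam_def, lt_div_iff₀ hr0]
        nlinarith
      set x : EuclideanSpace ℝ (Fin N) := t • v with hx_def
      have hx0 : x ≠ 0 := smul_ne_zero ht.ne' hv0
      have hxn : ‖x‖ = t := by
        rw [hx_def, norm_smul, Real.norm_eq_abs, hv, abs_of_pos ht, mul_one]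
      set b : EuclideanSpace ℝ (Fin N) := p - t⁻¹ • v with hb_def
      have H := h b lam hlam0 x hx0 (by rw [hxn]; exact htlam)
      rw [hxn] at H
      have e1 : ((t:ℝ)^2)⁻¹ • x + b = p := by
        rw [hx_def, hb_def, smul_smul]
        have h5 : ((t:ℝ)^2)⁻¹ * t = t⁻¹ := by
          field_simp
        rw [h5]; abel
      have e2 : ((lam:ℝ)^2)⁻¹ • x + b = q := by
        have hl2 : lam^2 = t^2 / s := by
          rw [hlam_def, div_pow, hr2]
        rw [hl2, hx_def, hb_def, smul_smul]
        have h5 : (t^2/s)⁻¹ * t = t⁻¹ - d := by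
          rw [hs_def]; field_simp
        rw [h5, sub_smul, hdv]
        abel
      rw [e1, e2] at H
      have hl : lam ^ (-((N:ℝ) - 2)) = t ^ (-((N:ℝ) - 2)) * r ^ ((N:ℝ) - 2) := by
        rw [hlam_def, div_eq_mul_inv, Real.mul_rpow ht.le (inv_nonneg.2 hr0.le),
          Real.inv_rpow hr0.le, Real.rpow_neg hr0.le, inv_inv]
      rw [hl] at H
      have hc : 0 < t ^ (-((N:ℝ) - 2)) := Real.rpow_pos_of_pos ht _
      have h6 : r ^ ((N:ℝ) - 2) * u q ≤ u p := by nlinarith [H, hc]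
      have h7 : r ^ (-((N:ℝ) - 2)) * (r ^ ((N:ℝ) - 2) * u q)
          ≤ r ^ (-((N:ℝ) - 2)) * u p :=
        mul_le_mul_of_nonneg_left h6 (Real.rpow_nonneg hr0.le _)
      calc u q = r ^ (-((N:ℝ) - 2)) * (r ^ ((N:ℝ) - 2) * u q) := by
            rw [← mul_assoc, ← Real.rpow_add hr0, neg_add_cancel, Real.rpow_zero, one_mul]
        _ ≤ r ^ (-((N:ℝ) - 2)) * u p := h7
        _ = (Real.sqrt s) ^ (-((N:ℝ) - 2)) * u p := by rw [hr_def]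
    -- take the limit t → 0⁺
    have hts : Tendsto (fun t : ℝ => (Real.sqrt (1 - t*d)) ^ (-((N:ℝ) - 2)) * u p)
        (𝓝[>] (0:ℝ)) (𝓝 (u p)) := by
      have hca : ContinuousAt (fun t : ℝ => (Real.sqrt (1 - t*d)) ^ (-((N:ℝ) - 2)) * u p) 0 := by
        apply ContinuousAt.mul _ continuousAt_const
        apply ContinuousAt.comp (g := fun y : ℝ => y ^ (-((N:ℝ) - 2)))
        · apply Real.continuousAt_rpow_const
          left
          simp
        · exact (Real.continuous_sqrt.comp (by continuity)).continuousAt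
      have := hca.tendsto
      simp only [zero_mul, sub_zero, Real.sqrt_one, Real.one_rpow, one_mul] at this
      exact this.mono_left nhdsWithin_le_nhds
    have hev : ∀ᶠ t in 𝓝[>] (0:ℝ),
        u q ≤ (Real.sqrt (1 - t*d)) ^ (-((N:ℝ) - 2)) * u p := by
      have h8 : ∀ᶠ t in 𝓝 (0:ℝ), t < d⁻¹ := eventually_lt_nhds (inv_pos.2 hd)
      filter_upwards [h8.filter_mono nhdsWithin_le_nhds, self_mem_nhdsWithin] with t h1 h2
      exact key t h2 h1
    exact ge_of_tendsto hts hev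
  intro x y
  exact le_antisymm (main y x) (main x y)
end

section
/- Let N ≥ 3, 0 < α < N, λ > 0, and let v, v_λ : ℝ^N → ℝ be nonnegative measurable functions with v_λ(y) = (λ/|y|)^{N−2} v(λ²y/|y|²). Define z(x) = ∫_{ℝ^N} v(y)^{(N+α)/(N−2)} |x−y|^{−(N−α)} dy and z_λ(x) = ∫_{ℝ^N} v_λ(y)^{(N+α)/(N−2)} |x−y|^{−(N−α)} dy, assumed finite. Then for all x, z_λ(x) − z(x) = ∫_{B_λ(0)} [ |x−y|^{−(N−α)} − (λ/|y|)^{N−α} |x − λ²y/|y|²|^{−(N−α)} ] · [ v_λ(y)^{(N+α)/(N−2)} − v(y)^{(N+α)/(N−2)} ] dy. -/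
open MeasureTheory Module

section InvAux

variable {E : Type*} [NormedAddCommGroup E] [InnerProductSpace ℝ E] [FiniteDimensional ℝ E]

noncomputable def invMap (lam : ℝ) (y : E) : E := (lam ^ 2 / ‖y‖ ^ 2) • y

omit [FiniteDimensional ℝ E] in
lemma norm_invMap (lam : ℝ) (hlam : 0 < lam) (y : E) (hy : y ≠ 0) :
    ‖invMap lam y‖ = lam ^ 2 / ‖y‖ := by
  have h : (0:ℝ) < ‖y‖ := norm_pos_iff.2 hy
  rw [invMap, norm_smul, Real.norm_eq_abs, abs_of_pos (by positivity)]
  field_simp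

omit [FiniteDimensional ℝ E] in
lemma invMap_ne_zero (lam : ℝ) (hlam : 0 < lam) (y : E) (hy : y ≠ 0) :
    invMap lam y ≠ 0 := by
  have h : (0:ℝ) < ‖y‖ := norm_pos_iff.2 hy
  intro h0
  have h2 := norm_invMap lam hlam y hy
  rw [h0, norm_zero] at h2
  field_simp at h2
  nlinarith

omit [FiniteDimensional ℝ E] in
lemma invMap_invMap (lam : ℝ) (hlam : 0 < lam) (y : E) (hy : y ≠ 0) :
    invMap lam (invMap lam y) = y := by
  have h : (0:ℝ) < ‖y‖ := norm_pos_iff.2 hy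
  rw [invMap, norm_invMap lam hlam y hy, invMap, smul_smul]
  have : lam ^ 2 / (lam ^ 2 / ‖y‖) ^ 2 * (lam ^ 2 / ‖y‖ ^ 2) = 1 := by
    field_simp
  rw [this, one_smul]

noncomputable def invDeriv (lam : ℝ) (y : E) : E →L[ℝ] E :=
  (lam ^ 2 / ‖y‖ ^ 2) • ((Submodule.reflection (ℝ ∙ y)ᗮ).toContinuousLinearEquiv : E →L[ℝ] E)

lemma hasFDerivAt_invMap (lam : ℝ) (y : E) (hy : y ≠ 0) :
    HasFDerivAt (invMap lam) (invDeriv lam y) y := by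
  have h : (0:ℝ) < ‖y‖ := norm_pos_iff.2 hy
  have hns : (‖y‖ ^ 2 : ℝ) ≠ 0 := by positivity
  have h1 : HasFDerivAt (fun x : E => ‖x‖ ^ 2) (2 • (innerSL ℝ y)) y := by
    simpa using (hasFDerivAt_id y).norm_sq
  have h2 := ((hasFDerivAt_inv hns).comp y h1).const_mul (lam ^ 2)
  have h3 := h2.smul (hasFDerivAt_id y)
  have hfun : invMap lam = fun x : E => (lam ^ 2 * (fun t : E => ‖t‖ ^ 2)⁻¹ x) • id x := by
    funext x
    simp [invMap, div_eq_mul_inv]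
  rw [hfun]
  refine h3.congr_fderiv ?_
  ext w
  simp only [invDeriv, ContinuousLinearMap.add_apply, ContinuousLinearMap.smul_apply,
    ContinuousLinearMap.smulRight_apply, ContinuousLinearMap.coe_id', id_eq,
    ContinuousLinearEquiv.coe_coe, LinearIsometryEquiv.coe_toContinuousLinearEquiv,
    ContinuousLinearMap.coe_comp', Function.comp_apply, ContinuousLinearMap.one_apply,
    smul_eq_mul, innerSL_apply_apply]
  rw [Submodule.reflection_orthogonal_apply, Submodule.reflection_singleton_apply]
  match_scalars <;> field_simp <;> (try ring) <;> simp
  field_simp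

lemma abs_det_invDeriv (lam : ℝ) (hlam : 0 < lam) (y : E) (hy : y ≠ 0) :
    |(invDeriv lam y).det| = (lam ^ 2 / ‖y‖ ^ 2) ^ (finrank ℝ E) := by
  have h : (0:ℝ) < ‖y‖ := norm_pos_iff.2 hy
  have hc : (0:ℝ) < lam ^ 2 / ‖y‖ ^ 2 := by positivity
  have hdet : (invDeriv lam y).det =
      (lam ^ 2 / ‖y‖ ^ 2) ^ (finrank ℝ E) *
        LinearMap.det (Submodule.reflection (ℝ ∙ y)ᗮ).toLinearMap := by
    rw [ContinuousLinearMap.det, invDeriv, ContinuousLinearMap.coe_smul, LinearMap.det_smul]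
    congr 2
  rw [hdet, Submodule.det_reflection, Submodule.orthogonal_orthogonal, finrank_span_singleton hy,
    pow_one, abs_mul, abs_of_pos (pow_pos hc _)]
  simp

omit [FiniteDimensional ℝ E] in
lemma image_invMap (lam : ℝ) (hlam : 0 < lam) :
    invMap lam '' (Metric.ball (0:E) lam \ {0}) = (Metric.closedBall (0:E) lam)ᶜ := by
  ext w
  simp only [Set.mem_image, Set.mem_diff, Metric.mem_ball, Metric.mem_closedBall,
    Set.mem_compl_iff, Set.mem_singleton_iff, dist_zero_right, not_le]
  constructor
  · rintro ⟨y, ⟨hylt, hy0⟩, rfl⟩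
    have hny : (0:ℝ) < ‖y‖ := norm_pos_iff.2 hy0
    rw [norm_invMap lam hlam y hy0, lt_div_iff₀ hny]
    nlinarith
  · intro hw
    have hw0 : w ≠ 0 := by
      intro h0; rw [h0, norm_zero] at hw; linarith
    have hnw : (0:ℝ) < ‖w‖ := norm_pos_iff.2 hw0
    refine ⟨invMap lam w, ⟨?_, invMap_ne_zero lam hlam w hw0⟩, invMap_invMap lam hlam w hw0⟩
    rw [norm_invMap lam hlam w hw0, div_lt_iff₀ hnw]
    nlinarith

omit [FiniteDimensional ℝ E] in
lemma injOn_invMap (lam : ℝ) (hlam : 0 < lam) :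
    Set.InjOn (invMap lam) (Metric.ball (0:E) lam \ {0}) := by
  intro a ha b hb hab
  have := congrArg (invMap lam) hab
  rwa [invMap_invMap lam hlam a ha.2, invMap_invMap lam hlam b hb.2] at this

lemma rpow_alg {lam r : ℝ} (hlam : 0 < lam) (hr : 0 < r) (N : ℕ) (α : ℝ) :
    (lam ^ 2 / r ^ 2) ^ N * (r / lam) ^ ((N:ℝ) + α) = (lam / r) ^ ((N:ℝ) - α) := by
  have h1 : (0:ℝ) < lam / r := by positivity
  rw [show lam ^ 2 / r ^ 2 = (lam / r) ^ 2 from (div_pow lam r 2).symm,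
    ← pow_mul, ← Real.rpow_natCast (lam / r) (2 * N),
    show r / lam = (lam / r)⁻¹ from (inv_div lam r).symm,
    Real.inv_rpow h1.le, ← Real.rpow_neg h1.le, ← Real.rpow_add h1]
  congr 1
  push_cast
  ring

end InvAux

theorem stmt6 (N : ℕ) (hN : 3 ≤ N) (α : ℝ) (hα : 0 < α) (hαN : α < N)
    (lam : ℝ) (hlam : 0 < lam)
    (v vlam : EuclideanSpace ℝ (Fin N) → ℝ)
    (hv : ∀ y, 0 ≤ v y) (hvlamnn : ∀ y, 0 ≤ vlam y)
    (hvm : Measurable v) (hvlamm : Measurable vlam)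
    (hrefl : ∀ y : EuclideanSpace ℝ (Fin N), y ≠ 0 →
      vlam y = (lam / ‖y‖) ^ ((N : ℝ) - 2) * v ((lam ^ 2 / ‖y‖ ^ 2) • y))
    (z zlam : EuclideanSpace ℝ (Fin N) → ℝ)
    (hzint : ∀ x, Integrable (fun y : EuclideanSpace ℝ (Fin N) =>
      v y ^ (((N : ℝ) + α) / ((N : ℝ) - 2)) * ‖x - y‖ ^ (-((N : ℝ) - α))))
    (hzlamint : ∀ x, Integrable (fun y : EuclideanSpace ℝ (Fin N) =>
      vlam y ^ (((N : ℝ) + α) / ((N : ℝ) - 2)) * ‖x - y‖ ^ (-((N : ℝ) - α))))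
    (hz : ∀ x, z x = ∫ y, v y ^ (((N : ℝ) + α) / ((N : ℝ) - 2)) * ‖x - y‖ ^ (-((N : ℝ) - α)))
    (hzlam : ∀ x, zlam x = ∫ y, vlam y ^ (((N : ℝ) + α) / ((N : ℝ) - 2)) * ‖x - y‖ ^ (-((N : ℝ) - α))) :
    ∀ x : EuclideanSpace ℝ (Fin N),
      zlam x - z x = ∫ y in Metric.ball (0 : EuclideanSpace ℝ (Fin N)) lam,
        (‖x - y‖ ^ (-((N : ℝ) - α))
          - (lam / ‖y‖) ^ ((N : ℝ) - α) * ‖x - (lam ^ 2 / ‖y‖ ^ 2) • y‖ ^ (-((N : ℝ) - α)))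
        * (vlam y ^ (((N : ℝ) + α) / ((N : ℝ) - 2)) - v y ^ (((N : ℝ) + α) / ((N : ℝ) - 2))) := by
  intro x
  have hT : ∀ y : EuclideanSpace ℝ (Fin N), (lam ^ 2 / ‖y‖ ^ 2) • y = invMap lam y :=
    fun _ => rfl
  simp only [hT] at hrefl ⊢
  have hN3 : (3:ℝ) ≤ (N:ℝ) := by exact_mod_cast hN
  have hN2 : ((N:ℝ) - 2) ≠ 0 := by linarith
  set p : ℝ := ((N : ℝ) + α) / ((N : ℝ) - 2) with hp
  set β : ℝ := (N : ℝ) - α with hβ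
  set B : Set (EuclideanSpace ℝ (Fin N)) := Metric.ball (0 : (EuclideanSpace ℝ (Fin N))) lam with hB
  set S : Set (EuclideanSpace ℝ (Fin N)) := B \ {0} with hS
  have hSmeas : MeasurableSet S := measurableSet_ball.diff (measurableSet_singleton _)
  have hfin : finrank ℝ (EuclideanSpace ℝ (Fin N)) = N := finrank_euclideanSpace_fin
  have hderiv : ∀ y ∈ S, HasFDerivWithinAt (invMap lam) (invDeriv lam y) S y :=
    fun y hy => (hasFDerivAt_invMap lam y hy.2).hasFDerivWithinAt
  have hinj : Set.InjOn (invMap lam) S := injOn_invMap lam hlam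
  have himg : invMap lam '' S = (Metric.closedBall (0:(EuclideanSpace ℝ (Fin N))) lam)ᶜ := image_invMap lam hlam
  -- a.e. equalities of sets
  haveI : Nontrivial (EuclideanSpace ℝ (Fin N)) := by
    have hpos : 0 < finrank ℝ (EuclideanSpace ℝ (Fin N)) := by rw [hfin]; omega
    exact nontrivial_of_finrank_pos (R := ℝ) hpos
  have h0 : (volume : Measure (EuclideanSpace ℝ (Fin N))) {(0:(EuclideanSpace ℝ (Fin N)))} = 0 := by
    have := Measure.addHaar_sphere (μ := (volume : Measure (EuclideanSpace ℝ (Fin N)))) (0:(EuclideanSpace ℝ (Fin N))) 0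
    simpa using this
  have haeS : S =ᵐ[volume] B := by
    rw [hS]
    exact MeasureTheory.diff_ae_eq_self.2 (measure_mono_null Set.inter_subset_right h0)
  have hcb : Metric.closedBall (0:(EuclideanSpace ℝ (Fin N))) lam =ᵐ[volume] B := by
    apply MeasureTheory.ae_eq_set.2
    constructor
    · rw [hB, Metric.closedBall_diff_ball]
      exact Measure.addHaar_sphere (μ := volume) _ _
    · have : B \ Metric.closedBall (0:(EuclideanSpace ℝ (Fin N))) lam = ∅ :=
        Set.diff_eq_empty.2 Metric.ball_subset_closedBall
      rw [this]; exact measure_empty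
  have haeC : (Metric.closedBall (0:(EuclideanSpace ℝ (Fin N))) lam)ᶜ =ᵐ[volume] Bᶜ :=
    MeasureTheory.ae_eq_set_compl_compl.2 hcb
  -- key pointwise identity
  have key : ∀ (u w : EuclideanSpace ℝ (Fin N) → ℝ), (∀ t, 0 ≤ w t) →
      (∀ t : (EuclideanSpace ℝ (Fin N)), t ≠ 0 → u (invMap lam t) = (‖t‖ / lam) ^ ((N:ℝ) - 2) * w t) →
      ∀ y : (EuclideanSpace ℝ (Fin N)), y ≠ 0 →
      |(invDeriv lam y).det| • (u (invMap lam y) ^ p * ‖x - invMap lam y‖ ^ (-β)) =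
        ((lam / ‖y‖) ^ β * ‖x - invMap lam y‖ ^ (-β)) * w y ^ p := by
    intro u w hw hrel y hy
    have hny : (0:ℝ) < ‖y‖ := norm_pos_iff.2 hy
    have hbase : (0:ℝ) ≤ ‖y‖ / lam := by positivity
    have hexp : ((N:ℝ) - 2) * p = (N:ℝ) + α := by rw [hp]; field_simp
    have hup : u (invMap lam y) ^ p = (‖y‖ / lam) ^ ((N:ℝ) + α) * w y ^ p := by
      rw [hrel y hy, Real.mul_rpow (Real.rpow_nonneg hbase _) (hw y),
        ← Real.rpow_mul hbase, hexp]
    rw [abs_det_invDeriv lam hlam y hy, hfin, smul_eq_mul, hup]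
    have halg := rpow_alg hlam hny N α
    rw [← hβ] at halg
    linear_combination (w y ^ p * ‖x - invMap lam y‖ ^ (-β)) * halg
  -- the two reflection relations
  have hrel1 : ∀ t : (EuclideanSpace ℝ (Fin N)), t ≠ 0 → vlam (invMap lam t) = (‖t‖ / lam) ^ ((N:ℝ) - 2) * v t := by
    intro t ht
    have hnt : (0:ℝ) < ‖t‖ := norm_pos_iff.2 ht
    have hTt : invMap lam t ≠ 0 := invMap_ne_zero lam hlam t ht
    rw [hrefl (invMap lam t) hTt, invMap_invMap lam hlam t ht,
      norm_invMap lam hlam t ht]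
    congr 2
    field_simp
  have hrel2 : ∀ t : (EuclideanSpace ℝ (Fin N)), t ≠ 0 → v (invMap lam t) = (‖t‖ / lam) ^ ((N:ℝ) - 2) * vlam t := by
    intro t ht
    have hnt : (0:ℝ) < ‖t‖ := norm_pos_iff.2 ht
    have hmul : (‖t‖ / lam) ^ ((N:ℝ) - 2) * (lam / ‖t‖) ^ ((N:ℝ) - 2) = 1 := by
      rw [← Real.mul_rpow (by positivity) (by positivity)]
      rw [show ‖t‖ / lam * (lam / ‖t‖) = 1 by field_simp]
      exact Real.one_rpow _
    rw [hrefl t ht, ← mul_assoc, hmul, one_mul]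
  -- change of variables
  have hcov1 := integral_image_eq_integral_abs_det_fderiv_smul volume hSmeas hderiv hinj
    (fun w => vlam w ^ p * ‖x - w‖ ^ (-β))
  have hcov2 := integral_image_eq_integral_abs_det_fderiv_smul volume hSmeas hderiv hinj
    (fun w => v w ^ p * ‖x - w‖ ^ (-β))
  have hEq1 : ∫ y in Bᶜ, vlam y ^ p * ‖x - y‖ ^ (-β)
      = ∫ y in B, ((lam / ‖y‖) ^ β * ‖x - invMap lam y‖ ^ (-β)) * v y ^ p := by
    calc ∫ y in Bᶜ, vlam y ^ p * ‖x - y‖ ^ (-β)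
        = ∫ y in (Metric.closedBall (0:(EuclideanSpace ℝ (Fin N))) lam)ᶜ, vlam y ^ p * ‖x - y‖ ^ (-β) :=
          (setIntegral_congr_set haeC).symm
      _ = ∫ y in invMap lam '' S, vlam y ^ p * ‖x - y‖ ^ (-β) := by rw [himg]
      _ = ∫ y in S, |(invDeriv lam y).det| •
            (vlam (invMap lam y) ^ p * ‖x - invMap lam y‖ ^ (-β)) := hcov1
      _ = ∫ y in S, ((lam / ‖y‖) ^ β * ‖x - invMap lam y‖ ^ (-β)) * v y ^ p :=
          setIntegral_congr_fun hSmeas (fun y hy => key vlam v hv hrel1 y hy.2)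
      _ = ∫ y in B, ((lam / ‖y‖) ^ β * ‖x - invMap lam y‖ ^ (-β)) * v y ^ p :=
          setIntegral_congr_set haeS
  have hEq2 : ∫ y in Bᶜ, v y ^ p * ‖x - y‖ ^ (-β)
      = ∫ y in B, ((lam / ‖y‖) ^ β * ‖x - invMap lam y‖ ^ (-β)) * vlam y ^ p := by
    calc ∫ y in Bᶜ, v y ^ p * ‖x - y‖ ^ (-β)
        = ∫ y in (Metric.closedBall (0:(EuclideanSpace ℝ (Fin N))) lam)ᶜ, v y ^ p * ‖x - y‖ ^ (-β) :=
          (setIntegral_congr_set haeC).symm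
      _ = ∫ y in invMap lam '' S, v y ^ p * ‖x - y‖ ^ (-β) := by rw [himg]
      _ = ∫ y in S, |(invDeriv lam y).det| •
            (v (invMap lam y) ^ p * ‖x - invMap lam y‖ ^ (-β)) := hcov2
      _ = ∫ y in S, ((lam / ‖y‖) ^ β * ‖x - invMap lam y‖ ^ (-β)) * vlam y ^ p :=
          setIntegral_congr_fun hSmeas (fun y hy => key v vlam hvlamnn hrel2 y hy.2)
      _ = ∫ y in B, ((lam / ‖y‖) ^ β * ‖x - invMap lam y‖ ^ (-β)) * vlam y ^ p :=
          setIntegral_congr_set haeS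
  -- integrability of the transformed integrands on B
  have hint1 : IntegrableOn
      (fun y : (EuclideanSpace ℝ (Fin N)) => ((lam / ‖y‖) ^ β * ‖x - invMap lam y‖ ^ (-β)) * v y ^ p) B volume := by
    have I1 := (integrableOn_image_iff_integrableOn_abs_det_fderiv_smul volume hSmeas hderiv hinj
      (fun w => vlam w ^ p * ‖x - w‖ ^ (-β))).1 (by rw [himg]; exact (hzlamint x).integrableOn)
    have I2 : IntegrableOn
        (fun y : (EuclideanSpace ℝ (Fin N)) => ((lam / ‖y‖) ^ β * ‖x - invMap lam y‖ ^ (-β)) * v y ^ p) S volume :=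
      I1.congr_fun (fun y hy => key vlam v hv hrel1 y hy.2) hSmeas
    rwa [IntegrableOn, Measure.restrict_congr_set haeS] at I2
  have hint2 : IntegrableOn
      (fun y : (EuclideanSpace ℝ (Fin N)) => ((lam / ‖y‖) ^ β * ‖x - invMap lam y‖ ^ (-β)) * vlam y ^ p) B volume := by
    have I1 := (integrableOn_image_iff_integrableOn_abs_det_fderiv_smul volume hSmeas hderiv hinj
      (fun w => v w ^ p * ‖x - w‖ ^ (-β))).1 (by rw [himg]; exact (hzint x).integrableOn)
    have I2 : IntegrableOn
        (fun y : (EuclideanSpace ℝ (Fin N)) => ((lam / ‖y‖) ^ β * ‖x - invMap lam y‖ ^ (-β)) * vlam y ^ p) S volume :=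
      I1.congr_fun (fun y hy => key v vlam hvlamnn hrel2 y hy.2) hSmeas
    rwa [IntegrableOn, Measure.restrict_congr_set haeS] at I2
  have hintA1 : IntegrableOn (fun y : (EuclideanSpace ℝ (Fin N)) => vlam y ^ p * ‖x - y‖ ^ (-β)) B volume :=
    (hzlamint x).integrableOn
  have hintA2 : IntegrableOn (fun y : (EuclideanSpace ℝ (Fin N)) => v y ^ p * ‖x - y‖ ^ (-β)) B volume :=
    (hzint x).integrableOn
  -- split the full-space integrals
  have hsplit1 : zlam x = (∫ y in B, vlam y ^ p * ‖x - y‖ ^ (-β))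
      + ∫ y in Bᶜ, vlam y ^ p * ‖x - y‖ ^ (-β) := by
    rw [hzlam x, ← integral_add_compl (measurableSet_ball (x := (0:(EuclideanSpace ℝ (Fin N)))) (ε := lam)) (hzlamint x)]
  have hsplit2 : z x = (∫ y in B, v y ^ p * ‖x - y‖ ^ (-β))
      + ∫ y in Bᶜ, v y ^ p * ‖x - y‖ ^ (-β) := by
    rw [hz x, ← integral_add_compl (measurableSet_ball (x := (0:(EuclideanSpace ℝ (Fin N)))) (ε := lam)) (hzint x)]
  -- assemble
  have hexpand : (∫ y in B,
      (‖x - y‖ ^ (-β) - (lam / ‖y‖) ^ β * ‖x - invMap lam y‖ ^ (-β))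
        * (vlam y ^ p - v y ^ p))
      = ∫ y in B, ((vlam y ^ p * ‖x - y‖ ^ (-β)
            + (lam / ‖y‖) ^ β * ‖x - invMap lam y‖ ^ (-β) * v y ^ p)
          - (v y ^ p * ‖x - y‖ ^ (-β)
            + (lam / ‖y‖) ^ β * ‖x - invMap lam y‖ ^ (-β) * vlam y ^ p)) :=
    integral_congr_ae (.of_forall fun y => by ring)
  have h14 : Integrable (fun y : EuclideanSpace ℝ (Fin N) => vlam y ^ p * ‖x - y‖ ^ (-β)
      + (lam / ‖y‖) ^ β * ‖x - invMap lam y‖ ^ (-β) * v y ^ p) (volume.restrict B) :=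
    hintA1.add hint1
  have h23 : Integrable (fun y : EuclideanSpace ℝ (Fin N) => v y ^ p * ‖x - y‖ ^ (-β)
      + (lam / ‖y‖) ^ β * ‖x - invMap lam y‖ ^ (-β) * vlam y ^ p) (volume.restrict B) :=
    hintA2.add hint2
  rw [hexpand, integral_sub h14 h23,
    integral_add hintA1 hint1, integral_add hintA2 hint2, hsplit1, hsplit2, hEq1, hEq2]
end

section
/- Let N ≥ 3 and let u : ℝ^N → (0,∞) be continuous. Suppose there exist constants A > 0 and, for each b ∈ ℝ^N, a number λ_b > 0, such that u(x) = λ_b^{N−2} |x−b|^{−(N−2)} u(λ_b²(x−b)/|x−b|² + b) for all x ≠ b, with lim_{|x|→∞} |x|^{N−2} u(x) = λ_b^{N−2} u(b) = A for all b. If A = 1 (so λ_b = u(b)^{−1/(N−2)}) and u is C¹, then the function x ↦ u(x)^{−2/(N−2)} satisfies: for all b and each coordinate i, u(b)^{−N/(N−2)} ∂u/∂x_i(b) = u(0)^{−N/(N−2)} ∂u/∂x_i(0) − (N−2) b_i; equivalently u(x)^{−2/(N−2)} = |x − x_0|² + d for some x_0 ∈ ℝ^N and constant d, i.e. u(x)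 = (d + |x−x_0|²)^{−(N−2)/2}. -/
open Filter

lemma clm_eq_zero_of_single {N : ℕ} (L : EuclideanSpace ℝ (Fin N) →L[ℝ] ℝ)
    (h : ∀ i, L (EuclideanSpace.single i 1) = 0) : L = 0 := by
  apply ContinuousLinearMap.coe_injective
  apply Module.Basis.ext (EuclideanSpace.basisFun (Fin N) ℝ).toBasis
  intro i
  simpa using h i

set_option maxHeartbeats 2000000 in
theorem stmt11 (N : ℕ) (hN : 3 ≤ N)
    (u : EuclideanSpace ℝ (Fin N) → ℝ) (hu : ContDiff ℝ 1 u) (hupos : ∀ x, 0 < u x)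
    (A : ℝ) (hA : 0 < A)
    (lamb : EuclideanSpace ℝ (Fin N) → ℝ) (hlamb : ∀ b, 0 < lamb b)
    (hrefl : ∀ (b x : EuclideanSpace ℝ (Fin N)), x ≠ b →
      u x = (lamb b) ^ ((N : ℝ) - 2) * ‖x - b‖ ^ (-((N : ℝ) - 2)) *
        u (((lamb b) ^ 2 / ‖x - b‖ ^ 2) • (x - b) + b))
    (hlim : Tendsto (fun x : EuclideanSpace ℝ (Fin N) => ‖x‖ ^ ((N : ℝ) - 2) * u x)
      (cocompact _) (nhds A))
    (hAb : ∀ b, (lamb b) ^ ((N : ℝ) - 2) * u b = A)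
    (hA1 : A = 1) :
    (∀ (b : EuclideanSpace ℝ (Fin N)) (i : Fin N),
      u b ^ (-((N : ℝ) / ((N : ℝ) - 2))) * fderiv ℝ u b (EuclideanSpace.single i 1)
        = u 0 ^ (-((N : ℝ) / ((N : ℝ) - 2))) * fderiv ℝ u 0 (EuclideanSpace.single i 1)
          - ((N : ℝ) - 2) * b i) ∧
    ∃ (x₀ : EuclideanSpace ℝ (Fin N)) (d : ℝ), ∀ x,
      u x = (d + ‖x - x₀‖ ^ 2) ^ (-(((N : ℝ) - 2) / 2)) := by
  subst hA1
  have hN2 : (0:ℝ) < (N:ℝ) - 2 := by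
    have : (3:ℝ) ≤ (N:ℝ) := by exact_mod_cast hN
    linarith
  have hne : (N:ℝ) - 2 ≠ 0 := hN2.ne'
  set p : ℝ := -(2 / ((N:ℝ) - 2)) with hp
  have hpne : p ≠ 0 := by
    rw [hp]; exact neg_ne_zero.2 (div_ne_zero two_ne_zero (ne_of_gt hN2))
  set v : EuclideanSpace ℝ (Fin N) → ℝ := fun x => u x ^ p with hvdef
  have hvpos : ∀ x, 0 < v x := fun x => Real.rpow_pos_of_pos (hupos x) p
  have hinv : ∀ b, lamb b ^ ((N:ℝ) - 2) = (u b)⁻¹ := by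
    intro b
    exact eq_inv_of_mul_eq_one_left (hAb b)
  -- λ_b ^ 2 = v b
  have hlam2 : ∀ b, (lamb b) ^ 2 = v b := by
    intro b
    have : (lamb b) ^ (2:ℝ) = v b := by
      have hvb : v b = (u b ^ (2/((N:ℝ)-2)))⁻¹ := by
        simp only [hvdef, hp, Real.rpow_neg (hupos b).le]
      have key : (lamb b) ^ (((N:ℝ)-2) * (2/((N:ℝ)-2))) = v b := by
        rw [Real.rpow_mul (hlamb b).le, hinv b, Real.inv_rpow (hupos b).le, hvb]
      have e2 : ((N:ℝ)-2) * (2/((N:ℝ)-2)) = 2 := by field_simp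
      rw [e2] at key
      exact key
    rw [← this, ← Real.rpow_natCast (lamb b) 2]
    norm_num
  -- key functional equation for v
  have hkey : ∀ b x, x ≠ b →
      v x * v b = ‖x - b‖ ^ 2 * v ((v b / ‖x - b‖ ^ 2) • (x - b) + b) := by
    intro b x hx
    have hxb : (0:ℝ) < ‖x - b‖ := by
      rw [norm_pos_iff]; exact sub_ne_zero.2 hx
    have h0 := hrefl b x hx
    rw [hlam2 b] at h0
    have A1 : (lamb b ^ ((N:ℝ)-2)) ^ p = (v b)⁻¹ := by
      rw [hinv b, Real.inv_rpow (hupos b).le]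
    have A2 : (‖x - b‖ ^ (-((N:ℝ)-2))) ^ p = ‖x - b‖ ^ 2 := by
      rw [← Real.rpow_mul (norm_nonneg _), ← Real.rpow_natCast ‖x - b‖ 2]
      congr 1
      rw [hp]
      push_cast
      field_simp
    have e1 : v x = (v b)⁻¹ * ‖x - b‖^2 * v ((v b / ‖x-b‖^2) • (x-b) + b) := by
      rw [hvdef]
      simp only
      have n1 : 0 ≤ lamb b ^ ((N:ℝ)-2) := Real.rpow_nonneg (hlamb b).le _
      have n2 : 0 ≤ ‖x - b‖ ^ (-((N:ℝ)-2)) := Real.rpow_nonneg (norm_nonneg _) _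
      rw [h0, Real.mul_rpow (mul_nonneg n1 n2) (hupos _).le,
        Real.mul_rpow n1 n2, A1, A2]
    rw [e1]
    have hvb := (hvpos b).ne'
    field_simp
  -- derivative of v
  have hud : Differentiable ℝ u := hu.differentiable one_ne_zero
  set D : EuclideanSpace ℝ (Fin N) → (EuclideanSpace ℝ (Fin N) →L[ℝ] ℝ) :=
    fun b => (p * u b ^ (p - 1)) • fderiv ℝ u b with hD
  have hVD : ∀ b, HasFDerivAt v (D b) b := fun b =>
    (hud b).hasFDerivAt.rpow_const (Or.inl (hupos b).ne')
  -- limit along rays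
  have hray : ∀ (b : EuclideanSpace ℝ (Fin N)) (i : Fin N),
      Tendsto (fun t : ℝ =>
        (v (t • EuclideanSpace.single i 1) - ‖t • EuclideanSpace.single i (1:ℝ) - b‖ ^ 2
          - D b (t • EuclideanSpace.single i 1 - b)) / t) atTop (nhds 0) := by
    intro b i
    set e : EuclideanSpace ℝ (Fin N) := EuclideanSpace.single i 1 with he
    have hnrme : ‖e‖ = 1 := by simp [he]
    set x : ℝ → EuclideanSpace ℝ (Fin N) := fun t => t • e with hx
    have hxnorm : ∀ t : ℝ, 0 ≤ t → ‖x t‖ = t := by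
      intro t ht
      rw [hx]; simp [norm_smul, hnrme, abs_of_nonneg ht]
    have hlow : ∀ t : ℝ, 0 ≤ t → t - ‖b‖ ≤ ‖x t - b‖ := by
      intro t ht
      calc t - ‖b‖ = ‖x t‖ - ‖b‖ := by rw [hxnorm t ht]
      _ ≤ ‖x t - b‖ := norm_sub_norm_le _ _
    have hhigh : ∀ t : ℝ, 0 ≤ t → ‖x t - b‖ ≤ t + ‖b‖ := by
      intro t ht
      calc ‖x t - b‖ ≤ ‖x t‖ + ‖b‖ := norm_sub_le _ _
      _ = t + ‖b‖ := by rw [hxnorm t ht]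
    have hposn : ∀ t : ℝ, ‖b‖ + 1 ≤ t → 0 < ‖x t - b‖ := by
      intro t ht
      have h0 : (0:ℝ) ≤ t := by nlinarith [norm_nonneg b]
      have := hlow t h0
      nlinarith [norm_nonneg b]
    have hxb : ∀ t : ℝ, ‖b‖ + 1 ≤ t → x t ≠ b := by
      intro t ht hEq
      have := hposn t ht
      rw [hEq, sub_self, norm_zero] at this
      linarith
    set ξ : ℝ → EuclideanSpace ℝ (Fin N) :=
      fun t => (v b / ‖x t - b‖ ^ 2) • (x t - b) + b with hξ
    have hξnorm : ∀ t : ℝ, ‖b‖ + 1 ≤ t → ‖ξ t - b‖ = v b / ‖x t - b‖ := by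
      intro t ht
      have hk := hposn t ht
      rw [hξ]
      simp only [add_sub_cancel_right, norm_smul, Real.norm_eq_abs]
      rw [abs_of_pos (div_pos (hvpos b) (pow_pos hk 2))]
      field_simp
    have haux : Tendsto (fun t : ℝ => v b / (t - ‖b‖)) atTop (nhds 0) :=
      Tendsto.div_atTop tendsto_const_nhds (tendsto_atTop_add_const_right atTop (-‖b‖) tendsto_id)
    have hξtend : Tendsto (fun t => ξ t - b) atTop (nhds 0) := by
      apply squeeze_zero_norm' ?_ haux
      filter_upwards [eventually_ge_atTop (‖b‖ + 1)] with t ht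
      rw [hξnorm t ht]
      have h0 : (0:ℝ) ≤ t := by nlinarith [norm_nonneg b]
      have hk : (0:ℝ) < t - ‖b‖ := by linarith
      exact div_le_div_of_nonneg_left (hvpos b).le hk (hlow t h0)
    have hid : ∀ t : ℝ, ‖b‖ + 1 ≤ t →
        v (x t) - ‖x t - b‖ ^ 2 - D b (x t - b)
          = (‖x t - b‖ ^ 2 / v b) * (v (b + (ξ t - b)) - v b - D b (ξ t - b)) := by
      intro t ht
      have hk := hposn t ht
      have hkey' := hkey b (x t) (hxb t ht)
      have hbξ : b + (ξ t - b) = ξ t := by abel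
      have hDsm : D b (ξ t - b) = (v b / ‖x t - b‖ ^ 2) * D b (x t - b) := by
        rw [hξ]
        simp only [add_sub_cancel_right, map_smul, smul_eq_mul]
      rw [hbξ, hDsm]
      have hvx : v (x t) = ‖x t - b‖ ^ 2 * v (ξ t) / v b := by
        rw [← hkey']
        field_simp [(hvpos b).ne']
      rw [hvx]
      have hk2 : (‖x t - b‖ : ℝ) ^ 2 ≠ 0 := by positivity
      field_simp [(hvpos b).ne']
    have hO := hasFDerivAt_iff_isLittleO_nhds_zero.1 (hVD b)
    rw [NormedAddCommGroup.tendsto_nhds_zero]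
    intro ε hε
    have hO' : ∀ᶠ h : EuclideanSpace ℝ (Fin N) in nhds 0,
        ‖v (b + h) - v b - D b h‖ ≤ (ε/4) * ‖h‖ := by
      have := (Asymptotics.isLittleO_iff.1 hO) (show (0:ℝ) < ε/4 by linarith)
      filter_upwards [this] with h hh using hh
    filter_upwards [eventually_ge_atTop (‖b‖ + 1), eventually_ge_atTop 1,
        hξtend.eventually hO'] with t ht ht1 hRt
    have h0 : (0:ℝ) ≤ t := by nlinarith [norm_nonneg b]
    have hk := hposn t ht
    have htpos : (0:ℝ) < t := by linarith
    have hbt : ‖b‖ ≤ t := by linarith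
    rw [hid t ht]
    have hRb : ‖v (b + (ξ t - b)) - v b - D b (ξ t - b)‖ ≤ (ε/4) * (v b / ‖x t - b‖) := by
      calc ‖v (b + (ξ t - b)) - v b - D b (ξ t - b)‖ ≤ (ε/4) * ‖ξ t - b‖ := hRt
      _ = (ε/4) * (v b / ‖x t - b‖) := by rw [hξnorm t ht]
    calc ‖(‖x t - b‖ ^ 2 / v b) * (v (b + (ξ t - b)) - v b - D b (ξ t - b)) / t‖
        = (‖x t - b‖ ^ 2 / v b) * ‖v (b + (ξ t - b)) - v b - D b (ξ t - b)‖ / t := by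
          rw [norm_div, norm_mul, Real.norm_eq_abs t, abs_of_pos htpos,
            Real.norm_eq_abs, abs_of_pos (div_pos (pow_pos hk 2) (hvpos b))]
      _ ≤ (‖x t - b‖ ^ 2 / v b) * ((ε/4) * (v b / ‖x t - b‖)) / t := by
          gcongr
          exact div_nonneg (by positivity) (hvpos b).le
      _ = (ε/4) * (‖x t - b‖ / t) := by
          field_simp [(hvpos b).ne']
      _ ≤ (ε/4) * 2 := by
          have h2 : ‖x t - b‖ ≤ 2 * t := by
            have := hhigh t h0; linarith
          have : ‖x t - b‖ / t ≤ 2 := by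
            rw [div_le_iff₀ htpos]; linarith
          gcongr
      _ < ε := by linarith
  -- gradient relation
  have hgrad : ∀ (b : EuclideanSpace ℝ (Fin N)) (i : Fin N),
      D b (EuclideanSpace.single i 1) = D 0 (EuclideanSpace.single i 1) + 2 * b i := by
    intro b i
    set e : EuclideanSpace ℝ (Fin N) := EuclideanSpace.single i 1 with he
    have h1 := (hray b i).sub (hray 0 i)
    have h2 : Tendsto (fun t : ℝ =>
        (2 * b i - D b e + D 0 e) + (D b b - ‖b‖ ^ 2)/t) atTop
        (nhds ((2 * b i - D b e + D 0 e) + 0)) := by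
      exact tendsto_const_nhds.add (Tendsto.div_atTop tendsto_const_nhds tendsto_id)
    have heq : (fun t : ℝ =>
          (v (t • e) - ‖t • e - b‖ ^ 2 - D b (t • e - b)) / t
            - (v (t • e) - ‖t • e - (0:EuclideanSpace ℝ (Fin N))‖ ^ 2 - D 0 (t • e - 0)) / t)
        =ᶠ[atTop] (fun t : ℝ => (2 * b i - D b e + D 0 e) + (D b b - ‖b‖ ^ 2)/t) := by
      filter_upwards [eventually_ge_atTop (1:ℝ)] with t ht
      have htne : t ≠ 0 := by linarith
      have hnorm : ‖t • e - b‖ ^ 2 = ‖t • e‖ ^ 2 - 2 * (t * b i) + ‖b‖ ^ 2 := by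
        rw [norm_sub_sq_real, real_inner_smul_left]
        congr 3
        simp [he, EuclideanSpace.inner_single_left]
      have hDbe : D b (t • e - b) = t * D b e - D b b := by
        rw [map_sub, map_smul, smul_eq_mul]
      have hD0e : D 0 (t • e) = t * D 0 e := by
        rw [map_smul, smul_eq_mul]
      rw [sub_zero, hnorm, hDbe, hD0e]
      field_simp
      ring
    have h3 := h1.congr' heq
    have h4 := tendsto_nhds_unique h3 h2
    rw [add_zero] at h4
    have h5 : (0:ℝ) = 2 * b i - D b e + D 0 e := by linarith [h4]
    linarith [h5]
  constructor
  · -- first conclusion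
    intro b i
    have h := hgrad b i
    have hq : p - 1 = -((N:ℝ)/((N:ℝ)-2)) := by
      rw [hp]; field_simp; ring
    rw [hD] at h
    simp only [ContinuousLinearMap.smul_apply, smul_eq_mul] at h
    rw [hq] at h
    set X := u b ^ (-((N:ℝ)/((N:ℝ)-2))) * fderiv ℝ u b (EuclideanSpace.single i 1) with hX
    set Y := u 0 ^ (-((N:ℝ)/((N:ℝ)-2))) * fderiv ℝ u 0 (EuclideanSpace.single i 1) with hY
    have h' : p * X = p * (Y - ((N:ℝ)-2) * b i) := by
      rw [hX, hY]
      rw [show p * (u b ^ (-((N:ℝ)/((N:ℝ)-2))) * (fderiv ℝ u b) (EuclideanSpace.single i 1))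
        = p * u b ^ (-((N:ℝ)/((N:ℝ)-2))) * (fderiv ℝ u b) (EuclideanSpace.single i 1) by ring, h]
      rw [hp]
      field_simp
      ring
    exact mul_left_cancel₀ hpne h'
  · -- second conclusion
    have hDvb : ∀ b, D b = D 0 + (2:ℝ) • (innerSL ℝ b) := by
      intro b
      have hz : D b - D 0 - (2:ℝ) • (innerSL ℝ b) = 0 := by
        apply clm_eq_zero_of_single
        intro i
        simp only [ContinuousLinearMap.sub_apply, ContinuousLinearMap.smul_apply,
          innerSL_apply_apply, smul_eq_mul, hgrad b i]
        rw [show (inner ℝ b (EuclideanSpace.single i 1) : ℝ) = b i by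
          simp [EuclideanSpace.inner_single_right]]
        ring
      rw [sub_sub] at hz
      exact sub_eq_zero.1 hz
    set w : EuclideanSpace ℝ (Fin N) → ℝ := fun y => v y - ‖y‖^2 - D 0 y with hw
    have hwD : ∀ y, HasFDerivAt w (0 : EuclideanSpace ℝ (Fin N) →L[ℝ] ℝ) y := by
      intro y
      have h1 := ((hVD y).sub (hasStrictFDerivAt_norm_sq y).hasFDerivAt).sub (D 0).hasFDerivAt
      refine h1.congr_fderiv ?_
      rw [hDvb y]
      ext z
      simp only [ContinuousLinearMap.zero_apply, ContinuousLinearMap.sub_apply,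
        ContinuousLinearMap.add_apply, ContinuousLinearMap.smul_apply, innerSL_apply_apply,
        smul_eq_mul]
      ring
    have hconst : ∀ y, w y = w 0 :=
      fun y => is_const_of_fderiv_eq_zero
        (fun z => (hwD z).differentiableAt) (fun z => (hwD z).fderiv) y 0
    have hveq : ∀ y, v y = ‖y‖^2 + D 0 y + v 0 := by
      intro y
      have h := hconst y
      simp only [hw, norm_zero, map_zero] at h
      norm_num at h
      linarith [h]
    set c : EuclideanSpace ℝ (Fin N) :=
      (InnerProductSpace.toDual ℝ (EuclideanSpace ℝ (Fin N))).symm (D 0) with hc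
    have hcprop : ∀ y, (inner ℝ c y : ℝ) = D 0 y := fun y => InnerProductSpace.toDual_symm_apply
    refine ⟨(-(1/2) : ℝ) • c, v 0 - ‖(-(1/2) : ℝ) • c‖^2, fun x => ?_⟩
    have hval : v 0 - ‖(-(1/2) : ℝ) • c‖^2 + ‖x - (-(1/2) : ℝ) • c‖^2 = v x := by
      rw [norm_sub_sq_real, real_inner_smul_right, real_inner_comm, hcprop, hveq x]
      ring
    rw [hval]
    rw [hvdef]
    simp only
    rw [← Real.rpow_mul (hupos x).le,
      show p * (-(((N:ℝ)-2)/2)) = 1 by rw [hp]; field_simp,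
      Real.rpow_one]
end
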